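/- arXiv:2410.21331 — 3 statements merged into one kernel-verified Lean document; each statement's English description precedes it below -/
import Mathlib

section
/- Let $x_1, x_2$ be i.i.d. with law $S\,\delta_0 + (1-S)\,\mathrm{Unif}(0,1]$ for $S \in [0,1)$. Then for all $x \in [0,1]$, $\mathrm{P}(x_1 \le x \mid x_1 \le x_2) = 1 - \frac{(1-S)^2 (1-x)^2}{1+S^2}$. -/
open MeasureTheory ProbabilityTheory

/-- The sparse-uniform mixture law `S·δ₀ + (1-S)·Unif(0,1]`. -/
noncomputable def mixLaw (S : ℝ) : Measure ℝ :=
  (ENNReal.ofReal S) • Measure.dirac 0 +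
    (ENNReal.ofReal (1 - S)) • (volume.restrict (Set.Ioc (0:ℝ) 1))

/-! By independence the law of `(X₁, X₂)` is `μ ⊗ μ`, so by Tonelli
`P(X₁ ≤ X₂, X₁ ≤ x) = ∫_{a ≤ x} μ[a, ∞) dμ(a)`. For the mixture `μ` the atom at `0` contributes
`S · μ[0, ∞) = S` and the uniform part `(1 - S)² ∫₀ˣ (1 - a) da`, so the joint probability is
`S + (1 - S)² (x - x²/2)`. Since `μ[a, ∞) = 0` for `a > 1`, the conditioning event has the
probability of the case `x = 1`, namely `(1 + S²)/2`, and the quotient is the claimed formula. -/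

open Set

lemma measurableSet_setOf_fst_le_snd_and_fst_mem {s : Set ℝ} (hs : MeasurableSet s) :
    MeasurableSet {p : ℝ × ℝ | p.1 ≤ p.2 ∧ p.1 ∈ s} :=
  (measurableSet_le measurable_fst measurable_snd).inter (measurable_fst hs)

lemma prod_setOf_fst_le_snd_and_fst_mem (ν ρ : Measure ℝ) [SFinite ρ] {s : Set ℝ}
    (hs : MeasurableSet s) :
    ν.prod ρ {p | p.1 ≤ p.2 ∧ p.1 ∈ s} = ∫⁻ a in s, ρ (Ici a) ∂ν := by
  have hsection : ∀ a, ρ (Prod.mk a ⁻¹' {p : ℝ × ℝ | p.1 ≤ p.2 ∧ p.1 ∈ s}) =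
      s.indicator (fun a ↦ ρ (Ici a)) a := by
    intro a
    by_cases h : a ∈ s
    · simp [h, Ici]
    · simp [h]
  rw [Measure.prod_apply (measurableSet_setOf_fst_le_snd_and_fst_mem hs),
    lintegral_congr hsection, lintegral_indicator hs]

lemma ProbabilityTheory.IndepFun.measure_le_and_mem {Ω : Type*} [MeasurableSpace Ω]
    {μ : Measure Ω} [IsFiniteMeasure μ] {X Y : Ω → ℝ}
    (hX : Measurable X) (hY : Measurable Y) (hXY : IndepFun X Y μ) {s : Set ℝ} (hs : MeasurableSet s) :
    μ {ω | X ω ≤ Y ω ∧ X ω ∈ s} = ∫⁻ a in s, μ.map Y (Ici a) ∂(μ.map X) := by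
  rw [← prod_setOf_fst_le_snd_and_fst_mem _ _ hs,
    ← (indepFun_iff_map_prod_eq_prod_map_map hX.aemeasurable hY.aemeasurable).mp hXY,
    Measure.map_apply (hX.prodMk hY) (measurableSet_setOf_fst_le_snd_and_fst_mem hs)]
  rfl

lemma lintegral_Ioc_ofReal_one_sub {x : ℝ} (hx0 : 0 ≤ x) (hx1 : x ≤ 1) :
    ∫⁻ a in Ioc 0 x, ENNReal.ofReal (1 - a) = ENNReal.ofReal (x - x ^ 2 / 2) := by
  rw [← ofReal_integral_eq_lintegral_ofReal, ← intervalIntegral.integral_of_le hx0]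
  · norm_num [intervalIntegral.integral_sub intervalIntegrable_const
      intervalIntegral.intervalIntegrable_id]
  · exact (continuous_const.sub continuous_id).integrableOn_Ioc
  · rw [Filter.EventuallyLE, ae_restrict_iff' measurableSet_Ioc]
    exact ae_of_all _ fun a ha ↦ by simp only [Pi.zero_apply]; linarith [ha.2]

instance instSFiniteMixLaw (S : ℝ) : SFinite (mixLaw S) := by
  unfold mixLaw; infer_instance

lemma lintegral_mixLaw (S : ℝ) (f : ℝ → ENNReal) :
    ∫⁻ a, f a ∂mixLaw S =
      ENNReal.ofReal S * f 0 + ENNReal.ofReal (1 - S) * ∫⁻ a in Ioc 0 1, f a := by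
  rw [mixLaw, lintegral_add_measure, lintegral_smul_measure, lintegral_smul_measure,
    lintegral_dirac, smul_eq_mul, smul_eq_mul]

lemma mixLaw_apply (S : ℝ) {s : Set ℝ} (hs : MeasurableSet s) :
    mixLaw S s =
      ENNReal.ofReal S * s.indicator 1 0 + ENNReal.ofReal (1 - S) * volume (s ∩ Ioc 0 1) := by
  rw [mixLaw, Measure.add_apply, Measure.smul_apply, Measure.smul_apply,
    Measure.restrict_apply hs, Measure.dirac_apply' _ hs, smul_eq_mul, smul_eq_mul]

lemma mixLaw_Ici_of_nonpos {S : ℝ} (hS : S ∈ Icc (0:ℝ) 1) {a : ℝ} (ha : a ≤ 0) :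
    mixLaw S (Ici a) = 1 := by
  have hinter : Ici a ∩ Ioc 0 1 = Ioc 0 1 :=
    inter_eq_self_of_subset_right fun y hy ↦ ha.trans hy.1.le
  rw [mixLaw_apply S measurableSet_Ici, hinter, indicator_of_mem (mem_Ici.mpr ha),
    Real.volume_Ioc, Pi.one_apply, mul_one, sub_zero, ENNReal.ofReal_one, mul_one,
    ← ENNReal.ofReal_add hS.1 (sub_nonneg.mpr hS.2)]
  simp

lemma mixLaw_Ici_of_mem_Ioc (S : ℝ) {a : ℝ} (ha : a ∈ Ioc 0 1) :
    mixLaw S (Ici a) = ENNReal.ofReal (1 - S) * ENNReal.ofReal (1 - a) := by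
  have hinter : Ici a ∩ Ioc 0 1 = Icc a 1 := by
    ext y
    simp only [mem_inter_iff, mem_Ici, mem_Ioc, mem_Icc]
    exact ⟨fun h ↦ ⟨h.1, h.2.2⟩, fun h ↦ ⟨h.1, ha.1.trans_le h.1, h.2⟩⟩
  rw [mixLaw_apply S measurableSet_Ici, hinter, indicator_of_notMem (by simpa using ha.1),
    Real.volume_Icc]
  simp

lemma mixLaw_Ici_of_one_lt (S : ℝ) {a : ℝ} (ha : 1 < a) : mixLaw S (Ici a) = 0 := by
  have hinter : Ici a ∩ Ioc 0 1 = ∅ := by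
    ext y
    simp only [mem_inter_iff, mem_Ici, mem_Ioc, mem_empty_iff_false, iff_false]
    intro h; linarith [h.2.2]
  rw [mixLaw_apply S measurableSet_Ici, hinter, indicator_of_notMem (by simp; linarith)]
  simp

lemma setLIntegral_Iic_mixLaw_Ici {S : ℝ} (hS : S ∈ Icc (0:ℝ) 1) {x : ℝ}
    (hx : x ∈ Icc (0:ℝ) 1) :
    ∫⁻ a in Iic x, mixLaw S (Ici a) ∂mixLaw S =
      ENNReal.ofReal (S + (1 - S) ^ 2 * (x - x ^ 2 / 2)) := by
  have hIoc : Iic x ∩ Ioc 0 1 = Ioc 0 x := by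
    ext y
    simp only [mem_inter_iff, mem_Iic, mem_Ioc]
    exact ⟨fun h ↦ ⟨h.2.1, h.1⟩, fun h ↦ ⟨h.2, h.1, h.2.trans hx.2⟩⟩
  have hS1 : 0 ≤ 1 - S := sub_nonneg.mpr hS.2
  have hx' : 0 ≤ x - x ^ 2 / 2 := by nlinarith [hx.1, hx.2]
  rw [← lintegral_indicator measurableSet_Iic, lintegral_mixLaw,
    indicator_of_mem (mem_Iic.mpr hx.1), mixLaw_Ici_of_nonpos hS le_rfl, mul_one,
    lintegral_indicator measurableSet_Iic, Measure.restrict_restrict measurableSet_Iic, hIoc,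
    setLIntegral_congr_fun measurableSet_Ioc
      fun a ha ↦ mixLaw_Ici_of_mem_Ioc S ⟨ha.1, ha.2.trans hx.2⟩,
    lintegral_const_mul _ (by fun_prop : Measurable fun a : ℝ ↦ ENNReal.ofReal (1 - a)),
    lintegral_Ioc_ofReal_one_sub hx.1 hx.2, ← ENNReal.ofReal_mul hS1, ← ENNReal.ofReal_mul hS1,
    ← ENNReal.ofReal_add hS.1 (mul_nonneg hS1 (mul_nonneg hS1 hx'))]
  ring_nf

lemma lintegral_mixLaw_Ici {S : ℝ} (hS : S ∈ Icc (0:ℝ) 1) :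
    ∫⁻ a, mixLaw S (Ici a) ∂mixLaw S = ENNReal.ofReal ((1 + S ^ 2) / 2) := by
  rw [← setLIntegral_eq_of_support_subset (s := Iic 1),
    setLIntegral_Iic_mixLaw_Ici hS ⟨zero_le_one, le_rfl⟩]
  · ring_nf
  · intro a ha
    by_contra h
    exact ha (mixLaw_Ici_of_one_lt S (not_le.mp h))

theorem stmt1 {Ω : Type*} [MeasureSpace Ω] [IsProbabilityMeasure (ℙ : Measure Ω)]
    (S : ℝ) (hS : S ∈ Set.Ico (0:ℝ) 1)
    (X1 X2 : Ω → ℝ) (hX1 : Measurable X1) (hX2 : Measurable X2)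
    (hindep : IndepFun X1 X2)
    (hL1 : Measure.map X1 ℙ = mixLaw S) (hL2 : Measure.map X2 ℙ = mixLaw S) :
    ∀ x ∈ Set.Icc (0:ℝ) 1,
      ℙ[{ω | X1 ω ≤ x} | {ω | X1 ω ≤ X2 ω}] =
        ENNReal.ofReal (1 - (1 - S)^2 * (1 - x)^2 / (1 + S^2)) := by
  intro x hx
  have hS' : S ∈ Icc (0:ℝ) 1 := Ico_subset_Icc_self hS
  have hB : ℙ {ω | X1 ω ≤ X2 ω} = ENNReal.ofReal ((1 + S ^ 2) / 2) := by
    simpa [hL1, hL2, lintegral_mixLaw_Ici hS'] using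
      hindep.measure_le_and_mem hX1 hX2 MeasurableSet.univ
  have hBA : ℙ ({ω | X1 ω ≤ X2 ω} ∩ {ω | X1 ω ≤ x}) =
      ENNReal.ofReal (S + (1 - S) ^ 2 * (x - x ^ 2 / 2)) := by
    have h := hindep.measure_le_and_mem hX1 hX2 (measurableSet_Iic (a := x))
    rwa [hL1, hL2, setLIntegral_Iic_mixLaw_Ici hS' hx] at h
  rw [cond_apply (measurableSet_le hX1 hX2), hB, hBA, ← ENNReal.div_eq_inv_mul,
    ← ENNReal.ofReal_div_of_pos (by positivity)]
  congr 1
  field_simp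
  ring
end

section
/- Let $x_1, x_2$ be i.i.d. with law $S\,\delta_0 + (1-S)\,\mathrm{Unif}(0,1]$ for $S \in [0,1)$. The conditional variances of $x_1$ satisfy $\mathrm{Var}(x_1 \mid x_1 \le x_2) = \frac{1}{6}\frac{(1-S)^2}{1+S^2} - \left(\frac{1}{3}\frac{(1-S)^2}{1+S^2}\right)^2$ and $\mathrm{Var}(x_1 \mid x_1 > x_2) = \frac{1}{6}\frac{3+S}{1+S} - \left(\frac{1}{3}\frac{2+S}{1+S}\right)^2$. -/
/-!
Conditioning on `{Y ∈ B}` commutes with pushing forward along `Y`, so both conditional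
variances are variances of the first coordinate under the product law `μ ⊗ μ`, `μ = mixLaw S`,
conditioned on `{x₁ ≤ x₂}` resp. `{x₂ < x₁}`. By Fubini, `∫_B x₁^k d(μ ⊗ μ) = ∫ μ(B_x) x^k dμ(x)`,
and the slice mass `μ(B_x)` is affine on `(0, 1]` (`(1 - S)(1 - x)` resp. `S + (1 - S) x`), so
the moments `k = 0, 1, 2` are the contribution of the atom at `0` plus integrals of polynomials
over `(0, 1]`.
-/

open MeasureTheory ProbabilityTheory

open Set

section Conditioning

variable {Ω β : Type*} {mΩ : MeasurableSpace Ω} {mβ : MeasurableSpace β} {μ : Measure Ω}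

lemma map_cond_preimage {Y : Ω → β} (hY : Measurable Y) {B : Set β} (hB : MeasurableSet B) :
    (μ[|Y ⁻¹' B]).map Y = (μ.map Y)[|B] := by
  rw [ProbabilityTheory.cond, ProbabilityTheory.cond, Measure.map_smul,
    ← Measure.restrict_map hY hB, Measure.map_apply hY hB]

lemma variance_comp_cond_preimage {Y : Ω → β} (hY : Measurable Y) {B : Set β}
    (hB : MeasurableSet B) {f : β → ℝ} (hf : Measurable f) :
    Var[f ∘ Y; μ[|Y ⁻¹' B]] = Var[f; (μ.map Y)[|B]] := by
  rw [← map_cond_preimage hY hB, variance_map hf.aemeasurable hY.aemeasurable]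

lemma integral_cond (s : Set Ω) (f : Ω → ℝ) :
    ∫ x, f x ∂μ[|s] = (μ.real s)⁻¹ * ∫ x in s, f x ∂μ := by
  rw [ProbabilityTheory.cond, integral_smul_measure, ENNReal.toReal_inv, smul_eq_mul,
    measureReal_def]

lemma variance_cond [IsFiniteMeasure μ] {s : Set Ω} (hs : μ s ≠ 0) {X : Ω → ℝ}
    (hX : MemLp X 2 (μ[|s])) :
    Var[X; μ[|s]]
      = (μ.real s)⁻¹ * ∫ x in s, X x ^ 2 ∂μ - ((μ.real s)⁻¹ * ∫ x in s, X x ∂μ) ^ 2 := by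
  have := cond_isProbabilityMeasure (μ := μ) hs
  rw [variance_eq_sub hX, integral_cond, integral_cond]
  rfl

end Conditioning

lemma setIntegral_comp_fst_prod {α β : Type*} {mα : MeasurableSpace α} {mβ : MeasurableSpace β}
    {μ : Measure α} {ν : Measure β} [SFinite μ] [IsFiniteMeasure ν] {g : α → ℝ}
    (hg : Integrable g μ) {B : Set (α × β)} (hB : MeasurableSet B) :
    ∫ p in B, g p.1 ∂μ.prod ν = ∫ x, ν.real (Prod.mk x ⁻¹' B) * g x ∂μ := by
  rw [← integral_indicator hB, integral_prod _ ((hg.comp_fst ν).indicator hB)]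
  congr 1 with x
  rw [← smul_eq_mul, ← integral_indicator_const _ (measurable_prodMk_left hB)]
  rfl

lemma setIntegral_Ioc_affine_mul_pow (a b : ℝ) (k : ℕ) :
    ∫ x in Ioc (0:ℝ) 1, (a + b * x) * x ^ k = a / (k + 1) + b / (k + 2) := by
  have hpoly : ∀ x : ℝ, (a + b * x) * x ^ k = a * x ^ k + b * x ^ (k + 1) := fun x => by ring
  simp_rw [← intervalIntegral.integral_of_le zero_le_one, hpoly]
  rw [intervalIntegral.integral_add ((intervalIntegral.intervalIntegrable_pow k).const_mul a)
      ((intervalIntegral.intervalIntegrable_pow (k + 1)).const_mul b),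
    intervalIntegral.integral_const_mul, intervalIntegral.integral_const_mul,
    integral_pow, integral_pow]
  push_cast
  ring

section MixLaw

variable {S : ℝ}

lemma isProbabilityMeasure_mixLaw (hS0 : 0 ≤ S) (hS1 : S ≤ 1) :
    IsProbabilityMeasure (mixLaw S) := by
  constructor
  simp only [mixLaw, Measure.add_apply, Measure.smul_apply, smul_eq_mul, measure_univ,
    Measure.restrict_apply_univ, Real.volume_Ioc, sub_zero, ENNReal.ofReal_one, mul_one]
  rw [← ENNReal.ofReal_add hS0 (by linarith), add_sub_cancel, ENNReal.ofReal_one]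

lemma mixLaw_real_apply (hS0 : 0 ≤ S) (hS1 : S ≤ 1) {A : Set ℝ} (hA : MeasurableSet A) :
    (mixLaw S).real A = S * A.indicator 1 0 + (1 - S) * volume.real (A ∩ Ioc 0 1) := by
  simp only [measureReal_def, mixLaw, Measure.add_apply, Measure.smul_apply, smul_eq_mul,
    Measure.dirac_apply' _ hA, Measure.restrict_apply hA]
  have hdirac : A.indicator (1 : ℝ → ENNReal) 0 ≠ ⊤ := by
    by_cases h : (0 : ℝ) ∈ A <;> simp [h]
  have hvol : volume (A ∩ Ioc (0:ℝ) 1) ≠ ⊤ :=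
    measure_ne_top_of_subset inter_subset_right measure_Ioc_lt_top.ne
  rw [ENNReal.toReal_add (ENNReal.mul_ne_top ENNReal.ofReal_ne_top hdirac)
      (ENNReal.mul_ne_top ENNReal.ofReal_ne_top hvol), ENNReal.toReal_mul, ENNReal.toReal_mul,
    ENNReal.toReal_ofReal hS0, ENNReal.toReal_ofReal (by linarith)]
  by_cases h : (0 : ℝ) ∈ A <;> simp [h]

lemma integrable_mixLaw {g : ℝ → ℝ} (hg : IntegrableOn g (Ioc 0 1)) :
    Integrable g (mixLaw S) :=
  ((integrable_dirac (by finiteness)).smul_measure ENNReal.ofReal_ne_top).add_measure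
    (hg.smul_measure ENNReal.ofReal_ne_top)

lemma integral_mixLaw (hS0 : 0 ≤ S) (hS1 : S ≤ 1) {g : ℝ → ℝ}
    (hg : IntegrableOn g (Ioc 0 1)) :
    ∫ x, g x ∂mixLaw S = S * g 0 + (1 - S) * ∫ x in Ioc 0 1, g x := by
  rw [mixLaw, integral_add_measure ((integrable_dirac (by finiteness)).smul_measure
      ENNReal.ofReal_ne_top) (hg.smul_measure ENNReal.ofReal_ne_top),
    integral_smul_measure, integral_smul_measure, integral_dirac,
    ENNReal.toReal_ofReal hS0, ENNReal.toReal_ofReal (by linarith), smul_eq_mul, smul_eq_mul]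

lemma setIntegral_fst_pow_mixLaw_prod (hS0 : 0 ≤ S) (hS1 : S ≤ 1) {B : Set (ℝ × ℝ)}
    (hB : MeasurableSet B) {a b : ℝ}
    (hslice : ∀ x ∈ Ioc (0:ℝ) 1, (mixLaw S).real (Prod.mk x ⁻¹' B) = a + b * x) (k : ℕ) :
    ∫ p in B, p.1 ^ k ∂(mixLaw S).prod (mixLaw S)
      = S * ((mixLaw S).real (Prod.mk 0 ⁻¹' B) * 0 ^ k)
        + (1 - S) * (a / (k + 1) + b / (k + 2)) := by
  have := isProbabilityMeasure_mixLaw hS0 hS1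
  have hint : IntegrableOn (fun x => (mixLaw S).real (Prod.mk x ⁻¹' B) * x ^ k) (Ioc 0 1) :=
    (Continuous.integrableOn_Ioc (by fun_prop : Continuous fun x : ℝ => (a + b * x) * x ^ k)
      ).congr_fun (fun x hx => by rw [hslice x hx]) measurableSet_Ioc
  rw [setIntegral_comp_fst_prod (g := fun x => x ^ k)
      (integrable_mixLaw (Continuous.integrableOn_Ioc (by fun_prop))) hB,
    integral_mixLaw hS0 hS1 hint, setIntegral_congr_fun measurableSet_Ioc
      (fun x hx => by rw [hslice x hx]), setIntegral_Ioc_affine_mul_pow]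

lemma memLp_fst_cond_mixLaw_prod (hS0 : 0 ≤ S) (hS1 : S ≤ 1) {B : Set (ℝ × ℝ)}
    (hB0 : (mixLaw S).prod (mixLaw S) B ≠ 0) :
    MemLp Prod.fst 2 (((mixLaw S).prod (mixLaw S))[|B]) := by
  have := isProbabilityMeasure_mixLaw hS0 hS1
  have hid : MemLp id 2 (mixLaw S) :=
    (memLp_two_iff_integrable_sq measurable_id.aestronglyMeasurable).mpr
      (integrable_mixLaw (Continuous.integrableOn_Ioc (by fun_prop)))
  exact ((hid.comp_fst (mixLaw S)).restrict B).smul_measure (ENNReal.inv_ne_top.mpr hB0)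

lemma variance_fst_cond_mixLaw_prod (hS0 : 0 ≤ S) (hS1 : S ≤ 1) {B : Set (ℝ × ℝ)}
    (hB : MeasurableSet B) {c a b : ℝ} (hzero : (mixLaw S).real (Prod.mk 0 ⁻¹' B) = c)
    (hslice : ∀ x ∈ Ioc (0:ℝ) 1, (mixLaw S).real (Prod.mk x ⁻¹' B) = a + b * x)
    (hmass : S * c + (1 - S) * (a + b / 2) ≠ 0) :
    Var[Prod.fst; ((mixLaw S).prod (mixLaw S))[|B]]
      = (1 - S) * (a / 3 + b / 4) / (S * c + (1 - S) * (a + b / 2))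
        - ((1 - S) * (a / 2 + b / 3) / (S * c + (1 - S) * (a + b / 2))) ^ 2 := by
  have := isProbabilityMeasure_mixLaw hS0 hS1
  have hmoment := setIntegral_fst_pow_mixLaw_prod hS0 hS1 hB hslice
  have hreal : ((mixLaw S).prod (mixLaw S)).real B = S * c + (1 - S) * (a + b / 2) := by
    have h0 := hmoment 0
    simp only [pow_zero, setIntegral_const, smul_eq_mul, mul_one, hzero] at h0
    rw [h0]
    norm_num
  have hmean := hmoment 1
  simp only [pow_one] at hmean
  have hB0 : (mixLaw S).prod (mixLaw S) B ≠ 0 := fun h => hmass (by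
    rw [← hreal, measureReal_def, h, ENNReal.toReal_zero])
  rw [variance_cond hB0 (memLp_fst_cond_mixLaw_prod hS0 hS1 hB0), hreal,
    hmoment 2, hzero, hmean]
  field_simp
  ring

lemma variance_fst_cond_le_mixLaw_prod (hS0 : 0 ≤ S) (hS1 : S < 1) :
    Var[Prod.fst; ((mixLaw S).prod (mixLaw S))[|{p | p.1 ≤ p.2}]]
      = (1/6) * ((1 - S)^2 / (1 + S^2)) - ((1/3) * ((1 - S)^2 / (1 + S^2)))^2 := by
  have hzero : (mixLaw S).real (Ici 0) = 1 := by
    rw [mixLaw_real_apply hS0 hS1.le measurableSet_Ici,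
      inter_eq_right.mpr (Ioc_subset_Ioi_self.trans Ioi_subset_Ici_self)]
    simp
  have hslice : ∀ x ∈ Ioc (0:ℝ) 1, (mixLaw S).real (Ici x) = (1 - S) + -(1 - S) * x := by
    intro x hx
    have hinter : Ici x ∩ Ioc 0 1 = Icc x 1 := by
      ext y
      simp only [mem_inter_iff, mem_Ici, mem_Ioc, mem_Icc]
      exact ⟨fun h => ⟨h.1, h.2.2⟩, fun h => ⟨h.1, hx.1.trans_le h.1, h.2⟩⟩
    rw [mixLaw_real_apply hS0 hS1.le measurableSet_Ici, hinter, Real.volume_real_Icc_of_le hx.2,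
      indicator_of_notMem (notMem_Ici.mpr hx.1)]
    ring
  have hmass : S * 1 + (1 - S) * ((1 - S) + -(1 - S) / 2) = (1 + S ^ 2) / 2 := by ring
  rw [variance_fst_cond_mixLaw_prod hS0 hS1.le (measurableSet_le measurable_fst measurable_snd)
    hzero hslice (by nlinarith), hmass]
  have : 1 + S ^ 2 ≠ 0 := by positivity
  field_simp
  ring

lemma variance_fst_cond_gt_mixLaw_prod (hS0 : 0 ≤ S) (hS1 : S < 1) :
    Var[Prod.fst; ((mixLaw S).prod (mixLaw S))[|{p | p.2 < p.1}]]
      = (1/6) * ((3 + S) / (1 + S)) - ((1/3) * ((2 + S) / (1 + S)))^2 := by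
  have hzero : (mixLaw S).real (Iio 0) = 0 := by
    have hempty : Iio (0:ℝ) ∩ Ioc 0 1 = ∅ :=
      eq_empty_of_forall_notMem fun y hy => (not_lt.mpr hy.2.1.le) hy.1
    rw [mixLaw_real_apply hS0 hS1.le measurableSet_Iio, hempty]
    simp
  have hslice : ∀ x ∈ Ioc (0:ℝ) 1, (mixLaw S).real (Iio x) = S + (1 - S) * x := by
    intro x hx
    have hinter : Iio x ∩ Ioc 0 1 = Ioo 0 x := by
      ext y
      simp only [mem_inter_iff, mem_Iio, mem_Ioc, mem_Ioo]
      exact ⟨fun h => ⟨h.2.1, h.1⟩, fun h => ⟨h.2, h.1, h.2.le.trans hx.2⟩⟩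
    rw [mixLaw_real_apply hS0 hS1.le measurableSet_Iio, hinter, Real.volume_real_Ioo_of_le hx.1.le,
      indicator_of_mem (mem_Iio.mpr hx.1)]
    simp
  have hmass : S * 0 + (1 - S) * (S + (1 - S) / 2) = (1 - S) * (1 + S) / 2 := by ring
  rw [variance_fst_cond_mixLaw_prod hS0 hS1.le (measurableSet_lt measurable_snd measurable_fst)
    hzero hslice (by nlinarith), hmass]
  have : 1 + S ≠ 0 := by positivity
  have : 1 - S ≠ 0 := by linarith
  field_simp
  ring

end MixLaw

theorem stmt5 {Ω : Type*} [MeasureSpace Ω] [IsProbabilityMeasure (ℙ : Measure Ω)]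
    (S : ℝ) (hS : S ∈ Set.Ico (0:ℝ) 1)
    (X1 X2 : Ω → ℝ) (hX1 : Measurable X1) (hX2 : Measurable X2)
    (hindep : IndepFun X1 X2)
    (hL1 : Measure.map X1 ℙ = mixLaw S) (hL2 : Measure.map X2 ℙ = mixLaw S) :
    variance X1 (ℙ[|{ω | X1 ω ≤ X2 ω}])
      = (1/6) * ((1 - S)^2 / (1 + S^2)) - ((1/3) * ((1 - S)^2 / (1 + S^2)))^2 ∧
    variance X1 (ℙ[|{ω | X2 ω < X1 ω}])
      = (1/6) * ((3 + S) / (1 + S)) - ((1/3) * ((2 + S) / (1 + S)))^2 := by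
  obtain ⟨hS0, hS1⟩ := hS
  have hlaw : Measure.map (fun ω => (X1 ω, X2 ω)) ℙ = (mixLaw S).prod (mixLaw S) := by
    rw [(indepFun_iff_map_prod_eq_prod_map_map hX1.aemeasurable hX2.aemeasurable).mp hindep,
      hL1, hL2]
  have hvar : ∀ B, MeasurableSet B → Var[X1; ℙ[|(fun ω => (X1 ω, X2 ω)) ⁻¹' B]]
      = Var[Prod.fst; ((mixLaw S).prod (mixLaw S))[|B]] := fun B hB => by
    rw [← hlaw, ← variance_comp_cond_preimage (hX1.prodMk hX2) hB measurable_fst]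
    rfl
  exact ⟨(hvar _ (measurableSet_le measurable_fst measurable_snd)).trans
      (variance_fst_cond_le_mixLaw_prod hS0 hS1),
    (hvar _ (measurableSet_lt measurable_snd measurable_fst)).trans
      (variance_fst_cond_gt_mixLaw_prod hS0 hS1)⟩
end

section
/- Let $x_1, x_2$ be i.i.d. with law $S\,\delta_0 + (1-S)\,\mathrm{Unif}(0,1]$ for $S \in [0,1)$. Then $\mathbb{E}[x_1 - x_2 \mid x_1 \le x_2] = -\frac{1}{3}\frac{(1-S)(1+2S)}{1+S^2}$ and $\mathbb{E}[x_1 - x_2 \mid x_1 > x_2] = \frac{1}{3}\frac{1+2S}{1+S}$. -/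
/-!
Write `μ = S δ₀ + (1 - S) Unif(0,1]`. On the closed region `x ≤ y`, integrating first in `x` gives
`S g(0, y) + (1 - S) ∫₀ʸ g(x, y) dx` for `y ∈ [0, 1]`, so integrating against `μ` in `y` reduces
everything to polynomial integrals over `[0, 1]`. The strict region `x₂ < x₁` needs no separate
computation: by exchangeability, and since `x₁ - x₂` vanishes on the diagonal, the integral of
`x₁ - x₂` over it is the negative of that over `x₁ ≤ x₂`, and `P(x₂ < x₁) = 1 - P(x₁ ≤ x₂)`.
-/

open MeasureTheory ProbabilityTheory

open Set

lemma integral_cond_preimage {Ω α : Type*} [MeasurableSpace Ω] [MeasurableSpace α]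
    {μ : Measure Ω} {φ : Ω → α} (hφ : Measurable φ) {T : Set α} (hT : MeasurableSet T)
    {g : α → ℝ} (hg : AEStronglyMeasurable g (μ.map φ)) :
    ∫ ω, g (φ ω) ∂μ[|φ ⁻¹' T] = ((μ.map φ).real T)⁻¹ * ∫ p in T, g p ∂μ.map φ := by
  rw [ProbabilityTheory.cond, integral_smul_measure, setIntegral_map hT hg hφ.aemeasurable,
    measureReal_def, Measure.map_apply hφ hT, ENNReal.toReal_inv, smul_eq_mul]

lemma Continuous.integrable_of_restrict_eq {X : Type*} [TopologicalSpace X] [MeasurableSpace X]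
    [OpensMeasurableSpace X] [T2Space X] {μ : Measure X} [IsFiniteMeasure μ] {K : Set X}
    {E : Type*} [NormedAddCommGroup E] (hK : IsCompact K) (hμK : μ.restrict K = μ) {g : X → E}
    (hg : Continuous g) :
    Integrable g μ := by
  rw [← hμK]
  exact hg.continuousOn.integrableOn_compact hK

lemma setIntegral_prod_lt_sub_eq_neg (μ : Measure ℝ) [SFinite μ] :
    ∫ p in {p : ℝ × ℝ | p.2 < p.1}, (p.1 - p.2) ∂μ.prod μ
      = -∫ p in {p : ℝ × ℝ | p.1 ≤ p.2}, (p.1 - p.2) ∂μ.prod μ := by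
  rw [← integral_indicator (measurableSet_lt measurable_snd measurable_fst),
    ← integral_indicator (measurableSet_le measurable_fst measurable_snd),
    ← integral_prod_swap ({p : ℝ × ℝ | p.1 ≤ p.2}.indicator fun p ↦ p.1 - p.2), ← integral_neg]
  congr 1
  ext ⟨x, y⟩
  simp only [indicator, mem_ofPred_eq, Prod.swap_prod_mk]
  split_ifs <;> linarith

lemma intervalIntegral_linear_add_sq (a b c : ℝ) :
    ∫ y in (0:ℝ)..1, (a + b * y + c * y ^ 2) = a + b / 2 + c / 3 := by
  rw [intervalIntegral.integral_add (Continuous.intervalIntegrable (by fun_prop) _ _)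
      (Continuous.intervalIntegrable (by fun_prop) _ _),
    intervalIntegral.integral_add intervalIntegrable_const
      (Continuous.intervalIntegrable (by fun_prop) _ _),
    intervalIntegral.integral_const_mul, intervalIntegral.integral_const_mul, integral_id,
    integral_pow]
  norm_num
  ring

instance (S : ℝ) : IsFiniteMeasure (mixLaw S) := by
  constructor
  simp [mixLaw]

lemma mixLaw_restrict_Icc (S : ℝ) : (mixLaw S).restrict (Icc 0 1) = mixLaw S := by
  refine Measure.restrict_eq_self_of_ae_mem ?_
  rw [mixLaw, ae_add_measure_iff]
  exact ⟨Measure.ae_smul_measure (by simp) _, Measure.ae_smul_measure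
    ((ae_restrict_iff' measurableSet_Ioc).2 (.of_forall Ioc_subset_Icc_self)) _⟩

section MixLaw

variable {S : ℝ} (hS0 : 0 ≤ S) (hS1 : S ≤ 1)
include hS0 hS1

lemma integral_mixLaw_s8 {f : ℝ → ℝ} (hf : Integrable f (mixLaw S)) :
    ∫ x, f x ∂mixLaw S = S * f 0 + (1 - S) * ∫ x in (0:ℝ)..1, f x := by
  rw [mixLaw] at hf ⊢
  rw [integral_add_measure (hf.mono_measure (Measure.le_add_right le_rfl))
      (hf.mono_measure (Measure.le_add_left le_rfl)),
    integral_smul_measure, integral_smul_measure, integral_dirac,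
    intervalIntegral.integral_of_le zero_le_one, ENNReal.toReal_ofReal hS0,
    ENNReal.toReal_ofReal (sub_nonneg.2 hS1), smul_eq_mul, smul_eq_mul]

lemma integral_mixLaw_indicator_Iic {f : ℝ → ℝ} (hf : Continuous f) {y : ℝ} (hy : y ∈ Icc 0 1) :
    ∫ x, {x | x ≤ y}.indicator f x ∂mixLaw S = S * f 0 + (1 - S) * ∫ x in (0:ℝ)..y, f x := by
  rw [integral_mixLaw_s8 hS0 hS1 (f := {x | x ≤ y}.indicator f) ((hf.integrable_of_restrict_eq
      isCompact_Icc (mixLaw_restrict_Icc S)).indicator measurableSet_Iic),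
    intervalIntegral.integral_indicator hy,
    indicator_of_mem (show (0:ℝ) ∈ {x | x ≤ y} from hy.1)]

lemma setIntegral_mixLaw_prod_le {g : ℝ × ℝ → ℝ} (hg : Continuous g) :
    ∫ p in {p : ℝ × ℝ | p.1 ≤ p.2}, g p ∂(mixLaw S).prod (mixLaw S)
      = S ^ 2 * g (0, 0)
        + (1 - S) * ∫ y in (0:ℝ)..1, (S * g (0, y) + (1 - S) * ∫ x in (0:ℝ)..y, g (x, y)) := by
  have hT : MeasurableSet {p : ℝ × ℝ | p.1 ≤ p.2} := measurableSet_le measurable_fst measurable_snd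
  have hint : Integrable ({p : ℝ × ℝ | p.1 ≤ p.2}.indicator g) ((mixLaw S).prod (mixLaw S)) :=
    (hg.integrable_of_restrict_eq (isCompact_Icc.prod isCompact_Icc)
      (by rw [← Measure.prod_restrict, mixLaw_restrict_Icc])).indicator hT
  have hinner : ∀ y ∈ Icc (0:ℝ) 1, ∫ x, {p : ℝ × ℝ | p.1 ≤ p.2}.indicator g (x, y) ∂mixLaw S
      = S * g (0, y) + (1 - S) * ∫ x in (0:ℝ)..y, g (x, y) := fun y hy ↦
    integral_mixLaw_indicator_Iic hS0 hS1 (f := fun x ↦ g (x, y)) (by fun_prop) hy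
  rw [← integral_indicator hT, integral_prod_symm _ hint,
    integral_mixLaw_s8 hS0 hS1 hint.integral_prod_right, hinner 0 ⟨le_rfl, zero_le_one⟩,
    intervalIntegral.integral_same, intervalIntegral.integral_congr fun y hy ↦ hinner y ?_]
  · ring
  · rwa [uIcc_of_le zero_le_one] at hy

lemma setIntegral_mixLaw_prod_le_sub :
    ∫ p in {p : ℝ × ℝ | p.1 ≤ p.2}, (p.1 - p.2) ∂(mixLaw S).prod (mixLaw S)
      = -((1 - S) * (1 + 2 * S) / 6) := by
  have hinner (y : ℝ) : ∫ x in (0:ℝ)..y, (x - y) = -(y ^ 2 / 2) := by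
    rw [intervalIntegral.integral_sub intervalIntegral.intervalIntegrable_id
      intervalIntegrable_const, integral_id, intervalIntegral.integral_const, smul_eq_mul]
    ring
  rw [setIntegral_mixLaw_prod_le hS0 hS1 (by fun_prop)]
  simp only [hinner]
  rw [intervalIntegral.integral_congr (g := fun y ↦ 0 + (-S) * y + (-(1 - S) / 2) * y ^ 2)
    fun y _ ↦ by ring, intervalIntegral_linear_add_sq]
  ring

lemma measureReal_mixLaw_prod_le :
    ((mixLaw S).prod (mixLaw S)).real {p : ℝ × ℝ | p.1 ≤ p.2} = (1 + S ^ 2) / 2 := by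
  have h := setIntegral_mixLaw_prod_le hS0 hS1 (g := fun _ ↦ (1:ℝ)) continuous_const
  rw [setIntegral_const, smul_eq_mul, mul_one] at h
  simp only [intervalIntegral.integral_const, sub_zero, smul_eq_mul, mul_one] at h
  rw [h, intervalIntegral.integral_congr (g := fun y ↦ S + (1 - S) * y + 0 * y ^ 2)
    fun y _ ↦ by ring, intervalIntegral_linear_add_sq]
  ring

end MixLaw

theorem stmt8 {Ω : Type*} [MeasureSpace Ω] [IsProbabilityMeasure (ℙ : Measure Ω)]
    (S : ℝ) (hS : S ∈ Set.Ico (0:ℝ) 1)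
    (X1 X2 : Ω → ℝ) (hX1 : Measurable X1) (hX2 : Measurable X2)
    (hindep : IndepFun X1 X2)
    (hL1 : Measure.map X1 ℙ = mixLaw S) (hL2 : Measure.map X2 ℙ = mixLaw S) :
    (∫ ω, (X1 ω - X2 ω) ∂(ℙ[|{ω | X1 ω ≤ X2 ω}]))
      = -(1/3) * ((1 - S)*(1 + 2*S) / (1 + S^2)) ∧
    (∫ ω, (X1 ω - X2 ω) ∂(ℙ[|{ω | X2 ω < X1 ω}]))
      = (1/3) * ((1 + 2*S) / (1 + S)) := by
  obtain ⟨hS0, hS1⟩ := hS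
  have hφ : Measurable fun ω ↦ (X1 ω, X2 ω) := hX1.prodMk hX2
  have hmap : Measure.map (fun ω ↦ (X1 ω, X2 ω)) ℙ = (mixLaw S).prod (mixLaw S) := by
    rw [hindep.map_prod_eq_prod_map_map hX1.aemeasurable hX2.aemeasurable, hL1, hL2]
  have hle : MeasurableSet {p : ℝ × ℝ | p.1 ≤ p.2} := measurableSet_le measurable_fst measurable_snd
  have hlt : {p : ℝ × ℝ | p.2 < p.1} = {p : ℝ × ℝ | p.1 ≤ p.2}ᶜ := by
    ext p
    simp
  have hcond := fun T hT ↦ integral_cond_preimage (μ := ℙ) hφ (T := T) hT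
    (g := fun p : ℝ × ℝ ↦ p.1 - p.2) (by fun_prop)
  refine ⟨(hcond _ hle).trans ?_, (hcond {p | p.2 < p.1} (hlt ▸ hle.compl)).trans ?_⟩
  · rw [hmap, measureReal_mixLaw_prod_le hS0 hS1.le, setIntegral_mixLaw_prod_le_sub hS0 hS1.le]
    field_simp
    ring
  · have := Measure.isProbabilityMeasure_map (μ := ℙ) hφ.aemeasurable
    rw [hlt, probReal_compl_eq_one_sub hle, ← hlt, hmap, measureReal_mixLaw_prod_le hS0 hS1.le,
      setIntegral_prod_lt_sub_eq_neg,
      setIntegral_mixLaw_prod_le_sub hS0 hS1.le,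
      show 1 - (1 + S ^ 2) / 2 = (1 - S) * (1 + S) / 2 by ring]
    have : 1 - S ≠ 0 := by linarith
    have : 1 + S ≠ 0 := by linarith
    field_simp
    ring
end
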